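/- Let p > 1 and a,b ∈ ℝ with p(1+a)+b < 0 and b < −p. Assume (f,g) ∈ C²(ℝ)×C¹(ℝ) with supp f, supp g ⊂ {x : |x| ≤ R}, R ≥ 1, and ∫_ℝ g(x)dx > 0. Then there exist constants ε₂ = ε₂(g,p,a,b,R) > 0 and C > 0 independent of ε such that for every 0 < ε ≤ ε₂ and every T ≥ C ε^{−p(p−1)/(−p(1+a)−b)}, there is no continuous solution U ∈ C(ℝ×[0,T]) with supp U ⊂ {(x,t) : |x| ≤ t+R} of the integral equation U = ε u_t⁰ + L'_{a,b}(|U|^p). -/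

import Mathlib

open MeasureTheory Set
open scoped Classical

/-!
Since `∫ f' = 0 < ∫ g`, `g - f' ≥ c > 0` on some `[β₁, β₂] ⊆ [-2R, 2R]`. The free wave
`u_t⁰(x,t)` equals `(g - f')(x - t)/2` once `x + t > R`, and `L'_{a,b}` is nonnegative, so
`U ≥ εc/2` on the strip `{x - t ∈ [β₁, β₂], t ≥ 2R}`.
Integrating `|U|^p` along the left-going characteristics that cross this strip gives
`U(x,t) ≳ ε^p T^{-(1+a)}` at points with `x + t ∼ T` far to the left of the cone.
Along the right-going characteristic `x = t - T`, `Φ(t) = U(t - T, t)` then satisfies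
`Φ(t) ≥ e + ∫_{3T/4}^t |Φ|^p K` with `e ∼ ε^p T^{-(1+a)}` and `K ≳ T^{-(2+a+b)}`. Comparing
`G = e + ∫ |Φ|^p K` with the Riccati equation `G' = G^p K` forces `(p - 1) ∫ K < e^{1-p}`,
that is `T^{-p(1+a)-b} ≲ ε^{-p(p-1)}`.
-/

/-- Japanese bracket `⟨x⟩ = √(1+x²)`. -/
noncomputable def jb (x : ℝ) : ℝ := Real.sqrt (1 + x ^ 2)

/-- The operator `L'_{a,b}`. -/
noncomputable def Lab' (a b : ℝ) (v : ℝ → ℝ → ℝ) (x t : ℝ) : ℝ :=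
    (1 / 2) * (∫ s in (0:ℝ)..t,
      v (x + t - s) s /
        (jb (s + jb (x + t - s)) ^ (1 + a) * jb (s - jb (x + t - s)) ^ (1 + b)))
  + (1 / 2) * (∫ s in (0:ℝ)..t,
      v (x - t + s) s /
        (jb (s + jb (x - t + s)) ^ (1 + a) * jb (s - jb (x - t + s)) ^ (1 + b)))

/-- `u_t⁰(x,t) = (1/2){f'(x+t) − f'(x−t) + g(x+t) + g(x−t)}`. -/
noncomputable def ut0 (f g : ℝ → ℝ) (x t : ℝ) : ℝ :=
  (1 / 2) * (deriv f (x + t) - deriv f (x - t) + g (x + t) + g (x - t))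

/-- Indicator `χ(x,t)` of the region `t − |x| > R`. -/
noncomputable def chiR (R x t : ℝ) : ℝ := if R < t - |x| then 1 else 0

/-- The weight function `w(x,t)`. -/
noncomputable def wgt (a R x t : ℝ) : ℝ :=
  if 0 < a then chiR R x t * (1 + t - |x|) ^ (1 + a) + (1 - chiR R x t)
  else if a = 0 then
    chiR R x t * (1 + t - |x|) + (1 - chiR R x t) / Real.log (t + |x| + R)
  else if -1 ≤ a then
    chiR R x t * (1 + t - |x|) ^ (1 + a) + (1 - chiR R x t) * (t + |x| + R) ^ a
  else chiR R x t * (1 + t + |x|) ^ (1 + a) + (1 - chiR R x t) * (t + |x| + R) ^ a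

/-- The weighted sup-norm `‖U‖ = sup_{ℝ×[0,T]} |w(x,t)U(x,t)|`. -/
noncomputable def wnorm (a R T : ℝ) (U : ℝ → ℝ → ℝ) : ℝ :=
  ⨆ q : ℝ × Set.Icc (0:ℝ) T, |wgt a R q.1 (q.2 : ℝ) * U q.1 (q.2 : ℝ)|

/-- The quantity `E_{a,b}(T)`. -/
noncomputable def Eab (p a b R T : ℝ) : ℝ :=
  if 0 < a ∧ 0 < p * (1 + a) + b then 1
  else if a = 0 ∧ -p ≤ b then Real.log (T + 3 * R) ^ p
  else if 0 < a ∧ p * (1 + a) + b = 0 then Real.log (T + 3 * R)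
  else if a < 0 ∧ -p ≤ b then (T + 2 * R) ^ (-(a * p))
  else (T + 2 * R) ^ (-(p * (1 + a)) - b)

/-- The quantity `D_a(T)`. -/
noncomputable def Da (a R T : ℝ) : ℝ :=
  if 0 < a then 1
  else if a = 0 then Real.log (T + 3 * R)
  else (T + 2 * R) ^ (-a)

/-- The five regimes of parameters `(a,b)` appearing in the lifespan estimates. -/
def Regime (p a b : ℝ) : Prop :=
  (0 < a ∧ 0 < p * (1 + a) + b) ∨ (a = 0 ∧ -p ≤ b) ∨
  (0 < a ∧ p * (1 + a) + b = 0) ∨ (a < 0 ∧ -p ≤ b) ∨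
  (p * (1 + a) + b < 0 ∧ b < -p)

/-- `u` is a classical solution of the IVP
`u_tt − u_xx = |u_t|^p / (⟨t+⟨x⟩⟩^{1+a}⟨t−⟨x⟩⟩^{1+b})` on `ℝ × [0,T]`
with data `u(x,0) = εf(x)`, `u_t(x,0) = εg(x)`. -/
def IsClassicalSol (p a b ε T : ℝ) (f g : ℝ → ℝ) (u : ℝ → ℝ → ℝ) : Prop :=
  ContDiffOn ℝ 2 (fun q : ℝ × ℝ => u q.1 q.2)
    ((Set.univ : Set ℝ) ×ˢ Set.Icc (0:ℝ) T) ∧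
  (∀ x t : ℝ, 0 < t → t < T →
    deriv (deriv (fun τ => u x τ)) t - deriv (deriv (fun y => u y t)) x
      = |deriv (fun τ => u x τ) t| ^ p /
          (jb (t + jb x) ^ (1 + a) * jb (t - jb x) ^ (1 + b))) ∧
  (∀ x : ℝ, u x 0 = ε * f x) ∧
  (∀ x : ℝ, deriv (fun τ => u x τ) 0 = ε * g x)

/-- `U` is a continuous solution, supported in `{|x| ≤ t+R}`, of the integral
equation `U = ε u_t⁰ + L'_{a,b}(|U|^p)` on `ℝ × [0,T]`. -/
def IsIntSol (p a b R ε T : ℝ) (f g : ℝ → ℝ) (U : ℝ → ℝ → ℝ) : Prop :=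
  ContinuousOn (fun q : ℝ × ℝ => U q.1 q.2)
    ((Set.univ : Set ℝ) ×ˢ Set.Icc (0:ℝ) T) ∧
  (∀ x t : ℝ, 0 ≤ t → t ≤ T → t + R < |x| → U x t = 0) ∧
  (∀ x t : ℝ, 0 ≤ t → t ≤ T →
    U x t = ε * ut0 f g x t + Lab' a b (fun y s => |U y s| ^ p) x t)

lemma one_le_jb (x : ℝ) : 1 ≤ jb x :=
  Real.one_le_sqrt.mpr (le_add_of_nonneg_right (sq_nonneg x))

lemma jb_pos (x : ℝ) : 0 < jb x := one_pos.trans_le (one_le_jb x)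

lemma abs_le_jb (x : ℝ) : |x| ≤ jb x := by
  rw [jb, ← Real.sqrt_sq_eq_abs]
  exact Real.sqrt_le_sqrt (le_add_of_nonneg_left zero_le_one)

lemma le_jb (x : ℝ) : x ≤ jb x := (le_abs_self x).trans (abs_le_jb x)

lemma jb_le_one_add_abs (x : ℝ) : jb x ≤ 1 + |x| := by
  rw [jb, Real.sqrt_le_left (by positivity)]
  nlinarith [sq_abs x, abs_nonneg x]

@[fun_prop]
lemma continuous_jb : Continuous jb := by
  unfold jb; fun_prop

lemma rpow_le_two_rpow_abs_mul {z L : ℝ} (r : ℝ) (hL : 0 < L) (hz : L / 2 ≤ z) (hz' : z ≤ 2 * L) :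
    z ^ r ≤ 2 ^ |r| * L ^ r := by
  have hz0 : 0 < z := by linarith
  rcases le_or_gt 0 r with hr | hr
  · rw [abs_of_nonneg hr, ← Real.mul_rpow zero_le_two hL.le]
    exact Real.rpow_le_rpow hz0.le hz' hr
  · rw [abs_of_neg hr, Real.rpow_neg zero_le_two, ← Real.inv_rpow zero_le_two,
      ← Real.mul_rpow (by norm_num) hL.le, inv_mul_eq_div]
    exact Real.rpow_le_rpow_of_nonpos (by positivity) hz hr.le

noncomputable def nonlinCoeff (a b x t : ℝ) : ℝ :=
  (jb (t + jb x) ^ (1 + a) * jb (t - jb x) ^ (1 + b))⁻¹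

lemma nonlinCoeff_pos (a b x t : ℝ) : 0 < nonlinCoeff a b x t := by
  unfold nonlinCoeff
  have := jb_pos (t + jb x)
  have := jb_pos (t - jb x)
  positivity

lemma abs_rpow_mul_nonlinCoeff_nonneg (u p a b x t : ℝ) : 0 ≤ |u| ^ p * nonlinCoeff a b x t :=
  mul_nonneg (Real.rpow_nonneg (abs_nonneg u) p) (nonlinCoeff_pos a b x t).le

lemma continuous_nonlinCoeff (a b : ℝ) : Continuous fun q : ℝ × ℝ => nonlinCoeff a b q.1 q.2 := by
  unfold nonlinCoeff
  refine Continuous.inv₀ ?_ fun q => (inv_pos.mp (nonlinCoeff_pos a b q.1 q.2)).ne'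
  exact ((by fun_prop : Continuous fun q : ℝ × ℝ => jb (q.2 + jb q.1)).rpow_const
    fun _ => Or.inl (jb_pos _).ne').mul
    ((by fun_prop : Continuous fun q : ℝ × ℝ => jb (q.2 - jb q.1)).rpow_const
    fun _ => Or.inl (jb_pos _).ne')

lemma Lab'_eq (a b : ℝ) (v : ℝ → ℝ → ℝ) (x t : ℝ) :
    Lab' a b v x t = 1 / 2 * (∫ s in (0 : ℝ)..t, v (x + t - s) s * nonlinCoeff a b (x + t - s) s)
      + 1 / 2 * ∫ s in (0 : ℝ)..t, v (x - t + s) s * nonlinCoeff a b (x - t + s) s := by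
  simp only [Lab', nonlinCoeff, div_eq_mul_inv]

lemma inv_mul_rpow_le_nonlinCoeff {a b x t L θ : ℝ} (hb : 1 + b ≤ 0) (hL : 0 < L)
    (hL₁ : L / 2 ≤ t + |x|) (hL₂ : t + |x| + 2 ≤ 2 * L) (hθ : 0 < θ) (hθx : θ ≤ jb (t - jb x)) :
    (2 ^ |1 + a|)⁻¹ * L ^ (-(1 + a)) * θ ^ (-(1 + b)) ≤ nonlinCoeff a b x t := by
  have h₁ : t + |x| ≤ jb (t + jb x) := by linarith [abs_le_jb x, le_jb (t + jb x)]
  have h₂ : jb (t + jb x) ≤ 2 * L := by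
    have := jb_le_one_add_abs (t + jb x)
    rw [abs_of_nonneg (by linarith [abs_nonneg x, abs_le_jb x])] at this
    linarith [jb_le_one_add_abs x]
  have hA := rpow_le_two_rpow_abs_mul (1 + a) hL (hL₁.trans h₁) h₂
  have hB : jb (t - jb x) ^ (1 + b) ≤ θ ^ (1 + b) := Real.rpow_le_rpow_of_nonpos hθ hθx hb
  rw [nonlinCoeff, Real.rpow_neg hL.le, Real.rpow_neg hθ.le, ← mul_inv, ← mul_inv]
  have := jb_pos (t + jb x)
  have := jb_pos (t - jb x)
  gcongr

lemma inv_mul_rpow_le_nonlinCoeff_sub {a b T s : ℝ} (hb : 1 + b ≤ 0) (hT : 4 ≤ T)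
    (hs₁ : 3 * T / 4 ≤ s) (hs₂ : s ≤ T) :
    (2 ^ |1 + a|)⁻¹ * T ^ (-(1 + a)) * (T / 4) ^ (-(1 + b)) ≤ nonlinCoeff a b (s - T) s := by
  have hsT : |s - T| = T - s := by rw [abs_of_nonpos (by linarith)]; ring
  have hθ : T / 4 ≤ jb (s - jb (s - T)) := by
    linarith [jb_le_one_add_abs (s - T), le_jb (s - jb (s - T))]
  exact inv_mul_rpow_le_nonlinCoeff hb (by linarith) (by rw [hsT]; linarith)
    (by rw [hsT]; linarith) (by positivity) hθ

section InitialData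

variable {R : ℝ} {f g : ℝ → ℝ}

lemma hasCompactSupport_of_eq_zero_of_lt_abs (hf : ∀ x, R < |x| → f x = 0) :
    HasCompactSupport f :=
  HasCompactSupport.intro (isCompact_Icc (a := -R) (b := R)) fun x hx =>
    hf x (lt_of_not_ge fun h => hx (abs_le.mp h))

lemma deriv_eq_zero_of_lt_abs (hf : ∀ x, R < |x| → f x = 0) {x : ℝ} (hx : R < |x|) :
    deriv f x = 0 := by
  have hev : f =ᶠ[nhds x] fun _ => 0 :=
    Filter.eventually_of_mem ((isOpen_lt continuous_const continuous_abs).mem_nhds hx) hf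
  rw [hev.deriv_eq, deriv_const]

lemma exists_deriv_lt_of_integral_pos (hf : ContDiff ℝ 1 f) (hg : Continuous g)
    (hsf : ∀ x, R < |x| → f x = 0) (hsg : ∀ x, R < |x| → g x = 0) (hgint : 0 < ∫ x, g x) :
    ∃ β, |β| ≤ R ∧ deriv f β < g β := by
  by_contra! hle
  have hfc := hasCompactSupport_of_eq_zero_of_lt_abs hsf
  have hf' : Continuous (deriv f) := hf.continuous_deriv le_rfl
  have hgf : ∀ x, g x ≤ deriv f x := fun x => by
    rcases le_or_gt |x| R with hx | hx
    · exact hle x hx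
    · rw [hsg x hx, deriv_eq_zero_of_lt_abs hsf hx]
  have hf'i : Integrable (deriv f) := hf'.integrable_of_hasCompactSupport hfc.deriv
  have hzero : ∫ x, deriv f x = 0 :=
    integral_eq_zero_of_hasDerivAt_of_integrable
      (fun x => (hf.differentiable one_ne_zero x).hasDerivAt) hf'i
      (hf.continuous.integrable_of_hasCompactSupport hfc)
  have hgi : Integrable g :=
    hg.integrable_of_hasCompactSupport (hasCompactSupport_of_eq_zero_of_lt_abs hsg)
  linarith [integral_mono hgi hf'i hgf]

lemma exists_Icc_le_sub_deriv (hR : 0 < R) (hf : ContDiff ℝ 1 f) (hg : Continuous g)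
    (hsf : ∀ x, R < |x| → f x = 0) (hsg : ∀ x, R < |x| → g x = 0) (hgint : 0 < ∫ x, g x) :
    ∃ c > 0, ∃ β₁ β₂, β₁ < β₂ ∧ -(2 * R) ≤ β₁ ∧ β₂ ≤ 2 * R ∧
      ∀ y ∈ Icc β₁ β₂, c ≤ g y - deriv f y := by
  obtain ⟨β, hβR, hβ⟩ := exists_deriv_lt_of_integral_pos hf hg hsf hsg hgint
  set c := (g β - deriv f β) / 2 with hc
  have hnhds : {y | c < g y - deriv f y} ∩ Ioo (-(2 * R)) (2 * R) ∈ nhds β := by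
    refine Filter.inter_mem ?_ (Ioo_mem_nhds ?_ ?_)
    · exact (hg.sub (hf.continuous_deriv le_rfl)).continuousAt.eventually_const_lt
        (show c < g β - deriv f β by linarith)
    all_goals linarith [abs_le.mp hβR]
  obtain ⟨r, hr, hball⟩ := Metric.mem_nhds_iff.mp hnhds
  have hIcc : Icc (β - r / 2) (β + r / 2) ⊆ Metric.ball β r := fun y hy => by
    rw [Metric.mem_ball, Real.dist_eq, abs_lt]
    constructor <;> linarith [hy.1, hy.2]
  have hβ₁ := (hball (hIcc (left_mem_Icc.mpr (by linarith)))).2.1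
  have hβ₂ := (hball (hIcc (right_mem_Icc.mpr (by linarith)))).2.2
  exact ⟨c, by linarith, β - r / 2, β + r / 2, by linarith, hβ₁.le, hβ₂.le,
    fun y hy => (hball (hIcc hy)).1.le⟩

lemma ut0_eq_of_lt_abs_add (hsf : ∀ x, R < |x| → f x = 0) (hsg : ∀ x, R < |x| → g x = 0)
    {x t : ℝ} (h : R < |x + t|) : ut0 f g x t = (g (x - t) - deriv f (x - t)) / 2 := by
  rw [ut0, deriv_eq_zero_of_lt_abs hsf h, hsg _ h]
  ring

lemma ut0_eq_zero (hsf : ∀ x, R < |x| → f x = 0) (hsg : ∀ x, R < |x| → g x = 0)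
    {x t : ℝ} (h₁ : R < |x + t|) (h₂ : R < |x - t|) : ut0 f g x t = 0 := by
  rw [ut0_eq_of_lt_abs_add hsf hsg h₁, deriv_eq_zero_of_lt_abs hsf h₂, hsg _ h₂]
  ring

end InitialData

theorem mul_integral_lt_rpow_of_le_add_integral {p e t₀ t₁ : ℝ} {Φ K : ℝ → ℝ} (hp : 1 < p)
    (he : 0 < e) (ht : t₀ ≤ t₁) (hΦ : ContinuousOn Φ (Icc t₀ t₁))
    (hK : ContinuousOn K (Icc t₀ t₁)) (hK₀ : ∀ s ∈ Icc t₀ t₁, 0 ≤ K s)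
    (hineq : ∀ t ∈ Icc t₀ t₁, e + ∫ s in t₀..t, |Φ s| ^ p * K s ≤ Φ t) :
    (p - 1) * ∫ s in t₀..t₁, K s < e ^ (1 - p) := by
  -- `G = e + ∫ |Φ|^p K` satisfies `G' ≥ G^p K`, so `G^(1-p)` decreases at rate at least `(p-1) K`.
  set h : ℝ → ℝ := fun s => |Φ s| ^ p * K s
  set G : ℝ → ℝ := fun t => e + ∫ s in t₀..t, h s
  have hh : ContinuousOn h (Icc t₀ t₁) :=
    (hΦ.abs.rpow_const fun _ _ => Or.inr (by linarith)).mul hK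
  have hG : ContinuousOn G (Icc t₀ t₁) := by
    have := intervalIntegral.continuousOn_primitive_interval'
      (hh.intervalIntegrable_of_Icc ht (μ := volume)) (left_mem_uIcc (a := t₀) (b := t₁))
    rw [uIcc_of_le ht] at this
    exact continuousOn_const.add this
  have hG' : ∀ t ∈ Ioo t₀ t₁, HasDerivAt G (h t) t := fun t hti =>
    (intervalIntegral.integral_hasDerivAt_right
      ((hh.mono (Icc_subset_Icc_right hti.2.le)).intervalIntegrable_of_Icc hti.1.le)
      ((hh.mono Ioo_subset_Icc_self).stronglyMeasurableAtFilter isOpen_Ioo t hti)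
      (hh.continuousAt (Icc_mem_nhds hti.1 hti.2))).const_add e
  have hGe : ∀ t ∈ Icc t₀ t₁, e ≤ G t := fun t hti =>
    le_add_of_nonneg_right (intervalIntegral.integral_nonneg hti.1 fun s hs =>
      mul_nonneg (Real.rpow_nonneg (abs_nonneg _) p) (hK₀ s ⟨hs.1, hs.2.trans hti.2⟩))
  have hGpos : ∀ t ∈ Icc t₀ t₁, 0 < G t := fun t hti => he.trans_le (hGe t hti)
  have hψ' : ∀ t ∈ Ioo t₀ t₁,
      HasDerivAt (fun t => G t ^ (1 - p)) (h t * (1 - p) * G t ^ (1 - p - 1)) t :=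
    fun t hti => (hG' t hti).rpow_const (Or.inl (hGpos t (Ioo_subset_Icc_self hti)).ne')
  have hψ'_le : ∀ t ∈ Icc t₀ t₁, h t * (1 - p) * G t ^ (1 - p - 1) ≤ (1 - p) * K t := by
    intro t hti
    have hGΦ : G t ^ p ≤ |Φ t| ^ p :=
      Real.rpow_le_rpow (hGpos t hti).le ((hineq t hti).trans (le_abs_self _)) (by linarith)
    have hinv : G t ^ (1 - p - 1) * G t ^ p = 1 := by
      rw [← Real.rpow_add (hGpos t hti)]; norm_num
    have := Real.rpow_pos_of_pos (hGpos t hti) (1 - p - 1)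
    calc h t * (1 - p) * G t ^ (1 - p - 1)
        = (1 - p) * (|Φ t| ^ p * G t ^ (1 - p - 1)) * K t := by ring
      _ ≤ (1 - p) * (G t ^ p * G t ^ (1 - p - 1)) * K t :=
        mul_le_mul_of_nonneg_right (mul_le_mul_of_nonpos_left
          (mul_le_mul_of_nonneg_right hGΦ this.le) (by linarith)) (hK₀ t hti)
      _ = (1 - p) * K t := by rw [mul_comm (G t ^ p), hinv, mul_one]
  have hint : IntervalIntegrable (fun t => h t * (1 - p) * G t ^ (1 - p - 1)) volume t₀ t₁ :=
    ((hh.mul continuousOn_const).mul (hG.rpow_const fun t hti =>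
      Or.inl (hGpos t hti).ne')).intervalIntegrable_of_Icc ht
  have hFTC := intervalIntegral.integral_eq_sub_of_hasDerivAt_of_le ht
    (hG.rpow_const fun t hti => Or.inl (hGpos t hti).ne') hψ' hint
  have hmono := intervalIntegral.integral_mono_on (g := fun t => (1 - p) * K t) ht hint
    ((continuousOn_const.mul hK).intervalIntegrable_of_Icc ht) hψ'_le
  rw [hFTC, intervalIntegral.integral_const_mul] at hmono
  have hG₀ : G t₀ = e := by simp [G]
  have := Real.rpow_pos_of_pos (hGpos t₁ (right_mem_Icc.mpr ht)) (1 - p)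
  rw [hG₀] at hmono
  linarith

namespace IsIntSol

variable {p a b R ε T : ℝ} {f g : ℝ → ℝ} {U : ℝ → ℝ → ℝ}

lemma continuousOn_comp (hU : IsIntSol p a b R ε T f g U) {φ : ℝ → ℝ} (hφ : Continuous φ)
    {t₀ t₁ : ℝ} (ht₀ : 0 ≤ t₀) (ht₁ : t₁ ≤ T) :
    ContinuousOn (fun s => U (φ s) s) (Icc t₀ t₁) :=
  hU.1.comp (hφ.prodMk continuous_id).continuousOn
    fun _ hs => ⟨trivial, ht₀.trans hs.1, hs.2.trans ht₁⟩

lemma intervalIntegrable (hU : IsIntSol p a b R ε T f g U) (hp : 0 ≤ p) {φ : ℝ → ℝ}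
    (hφ : Continuous φ) {t₀ t₁ : ℝ} (ht₀ : 0 ≤ t₀) (ht : t₀ ≤ t₁) (ht₁ : t₁ ≤ T) :
    IntervalIntegrable (fun s => |U (φ s) s| ^ p * nonlinCoeff a b (φ s) s) volume t₀ t₁ := by
  refine ContinuousOn.intervalIntegrable_of_Icc ht (ContinuousOn.mul ?_ ?_)
  · exact (hU.continuousOn_comp hφ ht₀ ht₁).abs.rpow_const fun _ _ => Or.inr hp
  · exact ((continuous_nonlinCoeff a b).comp (hφ.prodMk continuous_id)).continuousOn

lemma ut0_le (hU : IsIntSol p a b R ε T f g U) {x t : ℝ} (ht : 0 ≤ t) (hT : t ≤ T) :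
    ε * ut0 f g x t ≤ U x t := by
  rw [hU.2.2 x t ht hT, Lab'_eq]
  have h₁ : 0 ≤ ∫ s in (0 : ℝ)..t, |U (x + t - s) s| ^ p * nonlinCoeff a b (x + t - s) s :=
    intervalIntegral.integral_nonneg ht fun s _ => abs_rpow_mul_nonlinCoeff_nonneg _ p a b _ s
  have h₂ : 0 ≤ ∫ s in (0 : ℝ)..t, |U (x - t + s) s| ^ p * nonlinCoeff a b (x - t + s) s :=
    intervalIntegral.integral_nonneg ht fun s _ => abs_rpow_mul_nonlinCoeff_nonneg _ p a b _ s
  linarith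

lemma ut0_add_integral_le (hU : IsIntSol p a b R ε T f g U) (hp : 0 ≤ p) {x t t₀ : ℝ}
    (ht₀ : 0 ≤ t₀) (ht : t₀ ≤ t) (hT : t ≤ T) :
    ε * ut0 f g x t
      + 1 / 2 * (∫ s in (0 : ℝ)..t, |U (x + t - s) s| ^ p * nonlinCoeff a b (x + t - s) s)
      + 1 / 2 * (∫ s in t₀..t, |U (x - t + s) s| ^ p * nonlinCoeff a b (x - t + s) s)
      ≤ U x t := by
  rw [hU.2.2 x t (ht₀.trans ht) hT, Lab'_eq, add_assoc]
  gcongr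
  refine intervalIntegral.integral_mono_interval ht₀ ht le_rfl
    (Filter.Eventually.of_forall fun s => abs_rpow_mul_nonlinCoeff_nonneg _ p a b _ s)
    (hU.intervalIntegrable hp (by fun_prop) le_rfl (ht₀.trans ht) hT)

lemma free_wave_le (hU : IsIntSol p a b R ε T f g U) (hR : 0 < R)
    (hsf : ∀ x, R < |x| → f x = 0) (hsg : ∀ x, R < |x| → g x = 0) {η s : ℝ}
    (hη : -(2 * R) ≤ η) (hs : 2 * R ≤ s) (hsT : s ≤ T) :
    ε * ((g η - deriv f η) / 2) ≤ U (η + s) s := by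
  have hfar : R < |η + s + s| := by rw [abs_of_pos (by linarith)]; linarith
  simpa only [ut0_eq_of_lt_abs_add hsf hsg hfar, add_sub_cancel_right] using
    hU.ut0_le (x := η + s) (by linarith) hsT

lemma free_wave_le_integral (hU : IsIntSol p a b R ε T f g U) (hp : 0 ≤ p) (hb : 1 + b ≤ 0)
    (hR : 0 < R) (hε : 0 ≤ ε) (hsf : ∀ x, R < |x| → f x = 0) (hsg : ∀ x, R < |x| → g x = 0)
    {c β₁ β₂ : ℝ} (hc : 0 ≤ c) (hβ : β₁ ≤ β₂) (hβ₁ : -(2 * R) ≤ β₁) (hβ₂ : β₂ ≤ 2 * R)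
    (hF : ∀ y ∈ Icc β₁ β₂, c ≤ g y - deriv f y) {L x t : ℝ} (hL : 0 < L)
    (hL₁ : L / 2 ≤ x + t) (hL₂ : x + t + 2 ≤ 2 * L) (hR₆ : 6 * R ≤ x + t) (hxt : x - t ≤ β₁)
    (hT : t ≤ T) :
    (β₂ - β₁) / 2 * ((ε * c / 2) ^ p * ((2 ^ |1 + a|)⁻¹ * L ^ (-(1 + a))))
      ≤ ∫ s in (0 : ℝ)..t, |U (x + t - s) s| ^ p * nonlinCoeff a b (x + t - s) s := by
  set s₁ := (x + t - β₂) / 2 with hs₁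
  set s₂ := (x + t - β₁) / 2 with hs₂
  have h₀₁ : 0 ≤ s₁ := by linarith
  have h₁₂ : s₁ ≤ s₂ := by linarith
  have h₂t : s₂ ≤ t := by linarith
  have hpoint : ∀ s ∈ Icc s₁ s₂, (ε * c / 2) ^ p * ((2 ^ |1 + a|)⁻¹ * L ^ (-(1 + a)))
      ≤ |U (x + t - s) s| ^ p * nonlinCoeff a b (x + t - s) s := by
    intro s ⟨hs₁s, hs₂s⟩
    have hη : x + t - 2 * s ∈ Icc β₁ β₂ := ⟨by linarith, by linarith⟩
    have hU' : ε * c / 2 ≤ U (x + t - s) s := by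
      have := hU.free_wave_le hR hsf hsg (η := x + t - 2 * s) (s := s) (by linarith [hη.1])
        (by linarith) (by linarith)
      rw [show x + t - 2 * s + s = x + t - s by ring] at this
      nlinarith [hF _ hη]
    have hxs : |x + t - s| = x + t - s := abs_of_nonneg (by linarith)
    have hcoeff := inv_mul_rpow_le_nonlinCoeff (a := a) (x := x + t - s) (t := s) hb hL
      (by rwa [hxs, add_sub_cancel]) (by rwa [hxs, add_sub_cancel]) one_pos (one_le_jb _)
    rw [Real.one_rpow, mul_one] at hcoeff
    exact mul_le_mul (Real.rpow_le_rpow (by positivity) (hU'.trans (le_abs_self _)) hp) hcoeff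
      (by positivity) (by positivity)
  calc (β₂ - β₁) / 2 * ((ε * c / 2) ^ p * ((2 ^ |1 + a|)⁻¹ * L ^ (-(1 + a))))
      = ∫ s in s₁..s₂, (ε * c / 2) ^ p * ((2 ^ |1 + a|)⁻¹ * L ^ (-(1 + a))) := by
        rw [intervalIntegral.integral_const, smul_eq_mul, hs₁, hs₂]; ring
    _ ≤ ∫ s in s₁..s₂, |U (x + t - s) s| ^ p * nonlinCoeff a b (x + t - s) s :=
        intervalIntegral.integral_mono_on h₁₂ intervalIntegrable_const
          (hU.intervalIntegrable hp (by fun_prop) h₀₁ h₁₂ (h₂t.trans hT)) hpoint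
    _ ≤ ∫ s in (0 : ℝ)..t, |U (x + t - s) s| ^ p * nonlinCoeff a b (x + t - s) s :=
        intervalIntegral.integral_mono_interval h₀₁ h₁₂ h₂t
          (Filter.Eventually.of_forall fun s => abs_rpow_mul_nonlinCoeff_nonneg _ p a b _ s)
          (hU.intervalIntegrable hp (by fun_prop) le_rfl (h₀₁.trans (h₁₂.trans h₂t)) hT)

-- On the line `x = t - T` the right-going characteristic integral of `U (t - T) t` runs along
-- the line itself, while the left-going one crosses the strip where the free wave is positive.
lemma add_integral_le_on_line (hU : IsIntSol p a b R ε T f g U) (hp : 0 ≤ p) (hb : 1 + b ≤ 0)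
    (hR : 0 < R) (hε : 0 ≤ ε) (hsf : ∀ x, R < |x| → f x = 0) (hsg : ∀ x, R < |x| → g x = 0)
    {c β₁ β₂ : ℝ} (hc : 0 ≤ c) (hβ : β₁ ≤ β₂) (hβ₁ : -(2 * R) ≤ β₁) (hβ₂ : β₂ ≤ 2 * R)
    (hF : ∀ y ∈ Icc β₁ β₂, c ≤ g y - deriv f y) (hT : 12 * R + 4 ≤ T) {t : ℝ}
    (ht : t ∈ Icc (3 * T / 4) T) :
    (β₂ - β₁) / 4 * ((ε * c / 2) ^ p * ((2 ^ |1 + a|)⁻¹ * T ^ (-(1 + a))))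
      + ∫ s in (3 * T / 4)..t, |U (s - T) s| ^ p * (1 / 2 * nonlinCoeff a b (s - T) s)
      ≤ U (t - T) t := by
  obtain ⟨ht₁, ht₂⟩ := ht
  have hsplit := hU.ut0_add_integral_le (x := t - T) hp (by linarith) ht₁ ht₂
  have hfree := hU.free_wave_le_integral hp hb hR hε hsf hsg hc hβ hβ₁ hβ₂ hF
    (L := T) (x := t - T) (by linarith) (by linarith) (by linarith) (by linarith) (by linarith) ht₂
  have hut0 : ut0 f g (t - T) t = 0 :=
    ut0_eq_zero hsf hsg (by rw [abs_of_pos (by linarith)]; linarith)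
      (by rw [abs_of_neg (by linarith)]; linarith)
  have hline : ∫ s in (3 * T / 4)..t, |U (s - T) s| ^ p * (1 / 2 * nonlinCoeff a b (s - T) s)
      = 1 / 2 * ∫ s in (3 * T / 4)..t, |U (t - T - t + s) s| ^ p
        * nonlinCoeff a b (t - T - t + s) s := by
    rw [← intervalIntegral.integral_const_mul]
    congr 1 with s
    rw [show t - T - t + s = s - T by ring]
    ring
  rw [hut0, mul_zero, zero_add] at hsplit
  linarith

lemma riccati_on_window (hU : IsIntSol p a b R ε T f g U) (hp : 1 < p) (hb : 1 + b ≤ 0)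
    (hR : 0 < R) (hε : 0 < ε) (hsf : ∀ x, R < |x| → f x = 0) (hsg : ∀ x, R < |x| → g x = 0)
    {c β₁ β₂ : ℝ} (hc : 0 < c) (hβ : β₁ < β₂) (hβ₁ : -(2 * R) ≤ β₁) (hβ₂ : β₂ ≤ 2 * R)
    (hF : ∀ y ∈ Icc β₁ β₂, c ≤ g y - deriv f y) (hT : 12 * R + 4 ≤ T) :
    (p - 1) * (T / 4 * (1 / 2 * ((2 ^ |1 + a|)⁻¹ * T ^ (-(1 + a)) * (T / 4) ^ (-(1 + b)))))
      < ((β₂ - β₁) / 4 * ((ε * c / 2) ^ p * ((2 ^ |1 + a|)⁻¹ * T ^ (-(1 + a))))) ^ (1 - p) := by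
  have hT₀ : 0 < T := by linarith
  set K : ℝ → ℝ := fun s => 1 / 2 * nonlinCoeff a b (s - T) s
  have hK : ContinuousOn K (Icc (3 * T / 4) T) :=
    (continuous_const.mul ((continuous_nonlinCoeff a b).comp
      (continuous_sub_right T |>.prodMk continuous_id))).continuousOn
  have hwindow : T / 4 * (1 / 2 * ((2 ^ |1 + a|)⁻¹ * T ^ (-(1 + a)) * (T / 4) ^ (-(1 + b))))
      ≤ ∫ s in (3 * T / 4)..T, K s := by
    have := intervalIntegral.integral_mono_on (by linarith) intervalIntegrable_const
      (hK.intervalIntegrable_of_Icc (μ := volume) (by linarith)) fun s hs =>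
        mul_le_mul_of_nonneg_left (inv_mul_rpow_le_nonlinCoeff_sub hb (by linarith) hs.1 hs.2)
          one_half_pos.le
    rw [intervalIntegral.integral_const, smul_eq_mul] at this
    convert this using 2
    ring
  calc _ ≤ (p - 1) * ∫ s in (3 * T / 4)..T, K s :=
        mul_le_mul_of_nonneg_left hwindow (by linarith)
    _ < _ := mul_integral_lt_rpow_of_le_add_integral hp (by positivity) (by linarith)
        (hU.continuousOn_comp (φ := fun s => s - T) (by fun_prop) (by linarith) le_rfl) hK
        (fun s _ => mul_nonneg one_half_pos.le (nonlinCoeff_pos a b _ _).le)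
        fun t ht => hU.add_integral_le_on_line (by linarith) hb hR hε.le hsf hsg hc.le hβ.le
          hβ₁ hβ₂ hF hT ht

end IsIntSol

theorem exists_lifespan_bound {p a b R : ℝ} {f g : ℝ → ℝ} (hp : 1 < p)
    (hab : p * (1 + a) + b < 0) (hb : 1 + b ≤ 0) (hR : 0 < R) (hf : ContDiff ℝ 1 f)
    (hg : Continuous g) (hsf : ∀ x, R < |x| → f x = 0) (hsg : ∀ x, R < |x| → g x = 0)
    (hgint : 0 < ∫ x, g x) :
    ∃ C > 0, ∀ ε T (U : ℝ → ℝ → ℝ), 0 < ε → 12 * R + 4 ≤ T → IsIntSol p a b R ε T f g U →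
      T < C * ε ^ (-(p * (p - 1)) / (-(p * (1 + a)) - b)) := by
  obtain ⟨c, hc, β₁, β₂, hβ, hβ₁, hβ₂, hF⟩ := exists_Icc_le_sub_deriv hR hf hg hsf hsg hgint
  set d := -(p * (1 + a)) - b
  have hd : 0 < d := by linarith
  set A : ℝ := 2 ^ |1 + a|
  have hA : 0 < A := by positivity
  set X := (β₂ - β₁) / 4 * (c / 2) ^ p / A
  have hX : 0 < X := div_pos (mul_pos (by linarith) (by positivity)) hA
  set Y := (p - 1) * (4 ^ b / (2 * A))
  have hY : 0 < Y := mul_pos (by linarith) (by positivity)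
  refine ⟨(X ^ (1 - p) / Y) ^ d⁻¹, by positivity, fun ε T U hε hT hU => ?_⟩
  have hT₀ : 0 < T := by linarith
  have hw := hU.riccati_on_window hp hb hR hε hsf hsg hc hβ hβ₁ hβ₂ hF hT
  have hLHS : T / 4 * (1 / 2 * (A⁻¹ * T ^ (-(1 + a)) * (T / 4) ^ (-(1 + b))))
      = 4 ^ b / (2 * A) * (T ^ d * T ^ (-(1 + a) * (1 - p))) := by
    have h₄ : (T / 4) ^ (-(1 + b)) = 4 * 4 ^ b * T ^ (-(1 + b)) := by
      rw [Real.div_rpow hT₀.le (by norm_num), Real.rpow_neg (by norm_num : (0 : ℝ) ≤ 4),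
        div_inv_eq_mul, Real.rpow_add (by norm_num : (0 : ℝ) < 4), Real.rpow_one]
      ring
    have hTpow : T ^ d * T ^ (-(1 + a) * (1 - p)) = T * T ^ (-(1 + a)) * T ^ (-(1 + b)) := by
      rw [← Real.rpow_add hT₀, show d + -(1 + a) * (1 - p) = 1 + -(1 + a) + -(1 + b) by ring,
        Real.rpow_add hT₀, Real.rpow_add hT₀, Real.rpow_one]
    rw [h₄, hTpow]
    ring
  have hRHS : ((β₂ - β₁) / 4 * ((ε * c / 2) ^ p * (A⁻¹ * T ^ (-(1 + a))))) ^ (1 - p)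
      = X ^ (1 - p) * ε ^ (-(p * (p - 1))) * T ^ (-(1 + a) * (1 - p)) := by
    rw [show (β₂ - β₁) / 4 * ((ε * c / 2) ^ p * (A⁻¹ * T ^ (-(1 + a))))
        = X * ε ^ p * T ^ (-(1 + a)) by
          rw [show ε * c / 2 = ε * (c / 2) by ring, Real.mul_rpow hε.le (by positivity)]; ring,
      Real.mul_rpow (by positivity) (by positivity), Real.mul_rpow hX.le (by positivity),
      ← Real.rpow_mul hε.le, ← Real.rpow_mul hT₀.le, show p * (1 - p) = -(p * (p - 1)) by ring]
  rw [hLHS, hRHS, ← mul_assoc, ← mul_assoc] at hw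
  have hTd : T ^ d < X ^ (1 - p) / Y * ε ^ (-(p * (p - 1))) := by
    rw [div_mul_eq_mul_div, lt_div_iff₀ hY]
    nlinarith [lt_of_mul_lt_mul_right hw (by positivity)]
  calc T = (T ^ d) ^ d⁻¹ := (Real.rpow_rpow_inv hT₀.le hd.ne').symm
    _ < (X ^ (1 - p) / Y * ε ^ (-(p * (p - 1)))) ^ d⁻¹ :=
        Real.rpow_lt_rpow (by positivity) hTd (inv_pos.mpr hd)
    _ = (X ^ (1 - p) / Y) ^ d⁻¹ * ε ^ (-(p * (p - 1)) / d) := by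
        rw [Real.mul_rpow (by positivity) (by positivity), ← Real.rpow_mul hε.le,
          div_eq_mul_inv (-(p * (p - 1)))]

theorem blow_up_subcritical (p a b R : ℝ) (f g : ℝ → ℝ)
    (hp : 1 < p) (hab : p * (1 + a) + b < 0) (hb : b < -p)
    (hR : 1 ≤ R) (hf : ContDiff ℝ 2 f) (hg : ContDiff ℝ 1 g)
    (hsf : ∀ x : ℝ, R < |x| → f x = 0) (hsg : ∀ x : ℝ, R < |x| → g x = 0) (hgint : 0 < ∫ x : ℝ, g x) :
    ∃ ε₂ : ℝ, 0 < ε₂ ∧ ∃ C : ℝ, 0 < C ∧ ∀ ε : ℝ, 0 < ε → ε ≤ ε₂ →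
      ∀ T : ℝ, C * ε ^ (-(p * (p - 1)) / (-(p * (1 + a)) - b)) ≤ T →
        ¬ ∃ U : ℝ → ℝ → ℝ, IsIntSol p a b R ε T f g U := by
  obtain ⟨C, hC, hlifespan⟩ := exists_lifespan_bound hp hab (by linarith) (by linarith)
    (hf.of_le (by norm_num)) hg.continuous hsf hsg hgint
  refine ⟨1, one_pos, max C (12 * R + 4), by positivity, fun ε hε hε₁ T hT ⟨U, hU⟩ => ?_⟩
  have hpow : 1 ≤ ε ^ (-(p * (p - 1)) / (-(p * (1 + a)) - b)) :=
    Real.one_le_rpow_of_pos_of_le_one_of_nonpos hε hε₁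
      (div_nonpos_of_nonpos_of_nonneg (by nlinarith) (by linarith))
  have hCT : max C (12 * R + 4) ≤ T :=
    le_of_mul_le_of_one_le hT (le_trans (by positivity) hT) hpow
  have := hlifespan ε T U hε (le_of_max_le_right hCT) hU
  linarith [mul_le_mul_of_nonneg_right (le_max_left C (12 * R + 4)) (zero_le_one.trans hpow)]
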